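/- For every finite tree T with at least one edge and every integer k with 1 ≤ k ≤ κ(T), a caterpillar with exactly k edges can be obtained from T by contracting edges (i.e., there is a partition of the vertex set of T into nonempty connected parts whose quotient graph is a caterpillar with k edges). -/

import Mathlib

open SimpleGraph

/-- The number of edges of a simple graph. -/
noncomputable def edgeCount {V : Type*} (G : SimpleGraph V) : ℕ := G.edgeSet.ncard

/-- The degree of a vertex. -/
noncomputable def deg {V : Type*} (G : SimpleGraph V) (v : V) : ℕ := (G.neighborSet v).ncard

/-- The number of leaves (vertices of degree 1). -/
noncomputable def leafCount {V : Type*} (G : SimpleGraph V) : ℕ := {v | deg G v = 1}.ncard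

/-- The diameter: the maximum distance between two vertices. -/
noncomputable def treeDiam {V : Type*} (G : SimpleGraph V) : ℕ :=
  sSup {n | ∃ u v : V, G.dist u v = n}

/-- κ(T) = (number of leaves) + (diameter) - 2. -/
noncomputable def kappa {V : Type*} (G : SimpleGraph V) : ℕ :=
  leafCount G + treeDiam G - 2

/-- A graph is a path graph if it is acyclic, preconnected, and has maximum degree ≤ 2
(the empty graph counts as a path). -/
def IsPathGraph {W : Type*} (H : SimpleGraph W) : Prop :=
  H.IsAcyclic ∧ H.Preconnected ∧
    ∀ v a b c : W, H.Adj v a → H.Adj v b → H.Adj v c → a = b ∨ a = c ∨ b = c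

/-- A caterpillar is a tree whose non-leaf vertices induce a path. -/
def IsCaterpillar {V : Type*} (G : SimpleGraph V) : Prop :=
  G.IsTree ∧ IsPathGraph (G.induce {v | 2 ≤ deg G v})

/-- The quotient graph of `G` along a map `c` on vertices: two images are adjacent iff
they are distinct and some edge of `G` joins their fibers. -/
def quotientGraph {V W : Type*} (G : SimpleGraph V) (c : V → W) : SimpleGraph W where
  Adj a b := a ≠ b ∧ ∃ u v : V, c u = a ∧ c v = b ∧ G.Adj u v
  symm := by
    constructor
    rintro a b ⟨hne, u, v, hu, hv, h⟩
    exact ⟨hne.symm, v, u, hv, hu, h.symm⟩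
  loopless := by
    constructor
    rintro a ⟨hne, -⟩
    exact hne rfl

/-- A spider is a tree with at most one vertex of degree greater than 2. -/
def IsSpider {V : Type*} (G : SimpleGraph V) : Prop :=
  G.IsTree ∧ ∀ u v : V, 3 ≤ deg G u → 3 ≤ deg G v → u = v

/-- `k` is the maximum number of edges of a vertex-induced subgraph of `G`
that is a caterpillar. -/
def MaxInducedCaterpillar {V : Type*} (G : SimpleGraph V) (k : ℕ) : Prop :=
  IsGreatest {j : ℕ | ∃ s : Set V, IsCaterpillar (G.induce s) ∧ edgeCount (G.induce s) = j} k

/-!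
Take a path `P` of length `d = diam T`. Its interior vertices are not leaves, so at least
`leafCount T - 2` leaves lie off `P`. Given `k ≤ κ(T)`, keep the first `t = min k d` edges of `P`
and the pendant edges of `k - t` leaves off `P`, and contract everything else: a vertex goes to
the part of the path vertex it hangs from (its component in `T` minus the edges of `P`), all of
`P_t, …, P_d` and what hangs from them forming one part. Contracting connected parts of a tree gives a tree, here one whose non-leaves all lie on
the image of `P`; it is a caterpillar with `k` edges since a tree has one edge fewer than vertices.
-/

section Quotient

variable {V W : Type*} {G : SimpleGraph V} {c : V → W}

lemma quotientGraph_reachable {x y : V} (h : G.Reachable x y) :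
    (quotientGraph G c).Reachable (c x) (c y) := by
  obtain ⟨w⟩ := h
  induction w with
  | nil => rfl
  | @cons x y z hxy _ ih =>
    by_cases hc : c x = c y
    · rwa [hc]
    · exact Adj.reachable (G := quotientGraph G c) ⟨hc, x, y, rfl, rfl, hxy⟩ |>.trans ih

lemma quotientGraph_connected (hG : G.Connected) (hc : c.Surjective) :
    (quotientGraph G c).Connected := by
  refine (connected_iff _).2 ⟨fun a b => ?_, hG.nonempty.map c⟩
  obtain ⟨x, rfl⟩ := hc a
  obtain ⟨y, rfl⟩ := hc b
  exact quotientGraph_reachable (hG.preconnected x y)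

lemma SimpleGraph.Reachable.of_quotientGraph (hfib : ∀ x y, c x = c y → G.Reachable x y)
    {x y : V} (h : (quotientGraph G c).Reachable (c x) (c y)) : G.Reachable x y := by
  obtain ⟨q⟩ := h
  suffices ∀ {a b} (q : (quotientGraph G c).Walk a b) x y, c x = a → c y = b → G.Reachable x y
    from this q x y rfl rfl
  intro a b q
  induction q with
  | nil => exact fun x y hx hy => hfib x y (hx.trans hy.symm)
  | cons hadj _ ih =>
    obtain ⟨-, u, v, rfl, rfl, huv⟩ := hadj
    exact fun x y hx hy => (hfib x u hx).trans (huv.reachable.trans (ih v y rfl hy))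

lemma reachable_deleteEdges_of_fiber (hfib : ∀ w, (G.induce (c ⁻¹' {w})).Connected)
    {u v : V} (huv : c u ≠ c v) {x y : V} (hxy : c x = c y) :
    (G.deleteEdges {s(u, v)}).Reachable x y := by
  let f : G.induce (c ⁻¹' {c y}) →g G.deleteEdges {s(u, v)} :=
    ⟨Subtype.val, fun {a b} hab => deleteEdges_adj.2 ⟨hab, fun he => huv ?_⟩⟩
  · exact ((hfib (c y)).preconnected ⟨x, hxy⟩ ⟨y, rfl⟩).map f
  · have ha : c a = c y := a.2
    have hb : c b = c y := b.2
    rcases Sym2.eq_iff.1 he with ⟨hau, hbv⟩ | ⟨hav, hbu⟩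
    · rw [← hau, ← hbv, ha, hb]
    · rw [← hav, ← hbu, ha, hb]

lemma quotientGraph_isAcyclic (hG : G.IsAcyclic)
    (hfib : ∀ w, (G.induce (c ⁻¹' {w})).Connected) : (quotientGraph G c).IsAcyclic := by
  rw [isAcyclic_iff_forall_adj_isBridge]
  rintro _ _ hadj
  obtain ⟨hne, u, v, rfl, rfl, huv⟩ := id hadj
  refine isBridge_iff.2 fun hreach => ?_
  have hle : (quotientGraph G c).deleteEdges {s(c u, c v)} ≤
      quotientGraph (G.deleteEdges {s(u, v)}) c := by
    rintro a b hab
    obtain ⟨⟨hab, x, y, rfl, rfl, hxy⟩, he⟩ := deleteEdges_adj.1 hab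
    refine ⟨hab, x, y, rfl, rfl, deleteEdges_adj.2 ⟨hxy, fun h => he ?_⟩⟩
    rcases Sym2.eq_iff.1 h with ⟨rfl, rfl⟩ | ⟨rfl, rfl⟩
    · rfl
    · exact Sym2.eq_swap
  exact isBridge_iff.1 (isAcyclic_iff_forall_adj_isBridge.1 hG huv)
    ((hreach.mono hle).of_quotientGraph fun _ _ => reachable_deleteEdges_of_fiber hfib hne)

lemma quotientGraph_isTree (hG : G.IsTree) (hc : c.Surjective)
    (hfib : ∀ w, (G.induce (c ⁻¹' {w})).Connected) : (quotientGraph G c).IsTree :=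
  ⟨quotientGraph_connected hG.connected hc, quotientGraph_isAcyclic hG.isAcyclic hfib⟩

end Quotient

lemma SimpleGraph.IsTree.edgeCount_add_one {V : Type*} [Finite V] {G : SimpleGraph V}
    (hG : G.IsTree) : edgeCount G + 1 = Nat.card V := by
  rw [edgeCount, ← Nat.card_coe_set_eq]
  exact (isTree_iff_connected_and_card.1 hG).2

section Spine

variable {t : ℕ} {β : Type*} {Q : SimpleGraph (Fin (t + 1) ⊕ β)}

lemma induce_reachable_inl_of_spine {N : Set (Fin (t + 1) ⊕ β)}
    (hadj : ∀ i j : Fin (t + 1), (i : ℕ) + 1 = j → Q.Adj (.inl i) (.inl j))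
    (hN : ∀ i : Fin (t + 1), 0 < (i : ℕ) → (i : ℕ) < t → .inl i ∈ N)
    {i j : Fin (t + 1)} (hij : (i : ℕ) ≤ j) (hi : .inl i ∈ N) (hj : .inl j ∈ N) :
    (Q.induce N).Reachable ⟨_, hi⟩ ⟨_, hj⟩ := by
  obtain ⟨n, hn⟩ := Nat.exists_eq_add_of_le hij
  induction n generalizing j with
  | zero =>
    obtain rfl : i = j := Fin.ext hn.symm
    rfl
  | succ n ih =>
    have hmid : .inl ⟨i + n, by omega⟩ ∈ N := by
      rcases Nat.eq_zero_or_pos n with rfl | hn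
      · simpa using hi
      · exact hN _ (by simp; omega) (by simp; omega)
    exact (ih (by simp) hmid rfl).trans (Adj.reachable (hadj _ _ (by simp; omega)))

lemma isCaterpillar_of_spine [Finite β] (hQ : Q.IsTree)
    (hspine : ∀ i j : Fin (t + 1),
      Q.Adj (.inl i) (.inl j) ↔ (i : ℕ) + 1 = j ∨ (j : ℕ) + 1 = i)
    (hleg : ∀ s, (Q.neighborSet (.inr s)).Subsingleton) : IsCaterpillar Q := by
  set N := {v | 2 ≤ deg Q v}
  have mem_spine : ∀ v ∈ N, ∃ i, v = .inl i := by
    rintro (i | s) hs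
    · exact ⟨i, rfl⟩
    · have := Set.ncard_le_one_iff_subsingleton.2 (hleg s)
      change 2 ≤ (Q.neighborSet _).ncard at hs
      omega
  have inl_mem : ∀ i : Fin (t + 1), 0 < (i : ℕ) → (i : ℕ) < t → .inl i ∈ N := by
    intro i h0 ht
    show 1 < (Q.neighborSet _).ncard
    rw [Set.one_lt_ncard (Set.toFinite _)]
    refine ⟨.inl ⟨i - 1, by omega⟩, (hspine _ _).2 (Or.inr (by simp; omega)),
      .inl ⟨i + 1, by omega⟩, (hspine _ _).2 (Or.inl rfl), by simp [Fin.ext_iff]⟩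
  have hadj : ∀ i j : Fin (t + 1), (i : ℕ) + 1 = j → Q.Adj (.inl i) (.inl j) :=
    fun i j h => (hspine i j).2 (Or.inl h)
  refine ⟨hQ, hQ.isAcyclic.induce _, ?_, ?_⟩
  · rintro ⟨v, hv⟩ ⟨w, hw⟩
    obtain ⟨i, rfl⟩ := mem_spine v hv
    obtain ⟨j, rfl⟩ := mem_spine w hw
    rcases le_total (i : ℕ) j with h | h
    · exact induce_reachable_inl_of_spine hadj inl_mem h hv hw
    · exact (induce_reachable_inl_of_spine hadj inl_mem h hw hv).symm
  · rintro ⟨v, hv⟩ ⟨a, ha⟩ ⟨b, hb⟩ ⟨c, hc⟩ hva hvb hvc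
    obtain ⟨i, rfl⟩ := mem_spine v hv
    obtain ⟨j₁, rfl⟩ := mem_spine a ha
    obtain ⟨j₂, rfl⟩ := mem_spine b hb
    obtain ⟨j₃, rfl⟩ := mem_spine c hc
    simp only [comap_adj, Function.Embedding.subtype_apply, hspine] at hva hvb hvc
    simp only [Subtype.mk.injEq, Sum.inl.injEq, Fin.ext_iff]
    omega

end Spine

namespace SimpleGraph.Walk

variable {V : Type*} {G : SimpleGraph V} {a b : V} (p : G.Walk a b)

lemma exists_reachable_deleteEdges_getVert (hG : G.Preconnected) (v : V) :
    ∃ i ≤ p.length, (G.deleteEdges p.edgeSet).Reachable v (p.getVert i) := by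
  have of_mem_support : ∀ y ∈ p.support,
      ∃ i ≤ p.length, (G.deleteEdges p.edgeSet).Reachable y (p.getVert i) := fun y hy => by
    obtain ⟨i, rfl, hi⟩ := mem_support_iff_exists_getVert.1 hy
    exact ⟨i, hi, Reachable.refl _⟩
  suffices ∀ {v x : V} (w : G.Walk v x), x ∈ p.support →
      ∃ i ≤ p.length, (G.deleteEdges p.edgeSet).Reachable v (p.getVert i) from
    this (hG v a).some p.start_mem_support
  intro v x w hx
  induction w with
  | nil => exact of_mem_support _ hx
  | @cons v u _ hvu _ ih =>
    by_cases he : s(v, u) ∈ p.edges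
    · exact of_mem_support v (p.fst_mem_support_of_mem_edges he)
    · obtain ⟨i, hi, hu⟩ := ih hx
      exact ⟨i, hi, (deleteEdges_adj.2 ⟨hvu, he⟩).reachable.trans hu⟩

lemma eq_of_reachable_deleteEdges_getVert (hG : G.IsAcyclic) {p : G.Walk a b} (hp : p.IsPath)
    {i j : ℕ} (hi : i ≤ p.length) (hj : j ≤ p.length)
    (h : (G.deleteEdges p.edgeSet).Reachable (p.getVert i) (p.getVert j)) : i = j := by
  wlog hij : i < j generalizing i j
  · rcases (not_lt.1 hij).lt_or_eq with hji | hji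
    · exact (this hj hi h.symm hji).symm
    · exact hji.symm
  set e := s(p.getVert i, p.getVert (i + 1))
  have hbridge : ¬ (G.deleteEdges {e}).Reachable (p.getVert i) (p.getVert (i + 1)) :=
    isBridge_iff.1 (isAcyclic_iff_forall_adj_isBridge.1 hG (p.adj_getVert_succ (by omega)))
  have hle : G.deleteEdges p.edgeSet ≤ G.deleteEdges {e} :=
    deleteEdges_anti <| Set.singleton_subset_iff.2 <|
      p.mk_mem_edges_iff_exists.2 ⟨i, by omega, rfl⟩
  have hchain : ∀ k, i + 1 ≤ k → k ≤ p.length →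
      (G.deleteEdges {e}).Reachable (p.getVert (i + 1)) (p.getVert k) := by
    intro k hk
    induction k, hk using Nat.le_induction with
    | base => exact fun _ => Reachable.refl _
    | succ k hk ih =>
      intro hkl
      refine (ih (by omega)).trans
        (deleteEdges_adj.2 ⟨p.adj_getVert_succ (by omega), fun he => ?_⟩).reachable
      rcases Sym2.eq_iff.1 (Set.mem_singleton_iff.1 he) with ⟨h₁, -⟩ | ⟨-, h₂⟩
      · have := hp.getVert_injOn (by simp; omega) (by simp; omega) h₁
        omega
      · have := hp.getVert_injOn (by simp; omega) (by simp; omega) h₂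
        omega
  exact (hbridge ((h.mono hle).trans (hchain j (by omega) hj).symm)).elim

/-- The index of the vertex of `p` from which `v` hangs; for a path in a forest the infimum is
over a singleton. -/
noncomputable def projIndex (v : V) : ℕ :=
  sInf {i | i ≤ p.length ∧ (G.deleteEdges p.edgeSet).Reachable v (p.getVert i)}

variable {p}

lemma projIndex_le_and_reachable (hG : G.Preconnected) (v : V) :
    p.projIndex v ≤ p.length ∧
      (G.deleteEdges p.edgeSet).Reachable v (p.getVert (p.projIndex v)) :=
  Nat.sInf_mem (p.exists_reachable_deleteEdges_getVert hG v)

lemma projIndex_eq_of_reachable {u v : V} (h : (G.deleteEdges p.edgeSet).Reachable u v) :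
    p.projIndex u = p.projIndex v := by
  have hiff : ∀ x, (G.deleteEdges p.edgeSet).Reachable u x ↔
      (G.deleteEdges p.edgeSet).Reachable v x := fun x => ⟨h.symm.trans, h.trans⟩
  simp only [projIndex, hiff]

lemma projIndex_getVert (hG : G.IsAcyclic) (hp : p.IsPath) {i : ℕ} (hi : i ≤ p.length) :
    p.projIndex (p.getVert i) = i := by
  have : {j | j ≤ p.length ∧ (G.deleteEdges p.edgeSet).Reachable (p.getVert i) (p.getVert j)} =
      {i} :=
    Set.eq_singleton_iff_unique_mem.2
      ⟨⟨hi, Reachable.refl _⟩,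
        fun j hj => (eq_of_reachable_deleteEdges_getVert hG hp hi hj.1 hj.2).symm⟩
  rw [projIndex, this, csInf_singleton]

lemma exists_isPath_getVert_projIndex (hG : G.Preconnected) (v : V) :
    ∃ q : G.Walk v (p.getVert (p.projIndex v)),
      q.IsPath ∧ ∀ y ∈ q.support, p.projIndex y = p.projIndex v := by
  classical
  obtain ⟨q, hq⟩ := (projIndex_le_and_reachable hG v).2.exists_isPath
  refine ⟨q.mapLe (G.deleteEdges_le _), hq.mapLe _, fun y hy => ?_⟩
  rw [support_mapLe_eq_support] at hy
  exact (projIndex_eq_of_reachable ⟨q.takeUntil y hy⟩).symm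

end SimpleGraph.Walk

section Contraction

open SimpleGraph.Walk

variable {V : Type*} {G : SimpleGraph V} {a b : V} {β : Type*}

/-- Contracts every edge of `G` except the first `t` edges of `p` and the edges at the
leaves `ℓ s`. -/
noncomputable def caterpillarContraction (p : G.Walk a b) (t : ℕ) (ℓ : β → V) (v : V) :
    Fin (t + 1) ⊕ β :=
  open Classical in
  if h : ∃ s, ℓ s = v then .inr h.choose
  else .inl ⟨min (p.projIndex v) t, Nat.lt_succ_of_le (min_le_right _ _)⟩

variable {p : G.Walk a b} {t : ℕ} {ℓ : β → V}

lemma caterpillarContraction_eq_inr_iff (hℓ : ℓ.Injective) {v : V} {s : β} :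
    caterpillarContraction p t ℓ v = .inr s ↔ v = ℓ s := by
  unfold caterpillarContraction
  split_ifs with h
  · rw [Sum.inr.injEq]
    exact ⟨fun hs => hs ▸ h.choose_spec.symm, fun hv => hℓ (h.choose_spec.trans hv)⟩
  · exact ⟨nofun, fun hv => (h ⟨s, hv.symm⟩).elim⟩

lemma caterpillarContraction_eq_inl_iff {v : V} {i : Fin (t + 1)} :
    caterpillarContraction p t ℓ v = .inl i ↔
      v ∉ Set.range ℓ ∧ min (p.projIndex v) t = i := by
  unfold caterpillarContraction
  split_ifs with h
  · exact ⟨nofun, fun h' => (h'.1 h).elim⟩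
  · simp only [Sum.inl.injEq, Fin.ext_iff]
    exact ⟨fun hi => ⟨h, hi⟩, And.right⟩

lemma caterpillarContraction_getVert (hG : G.IsAcyclic) (hp : p.IsPath)
    (hoff : ∀ s, ℓ s ∉ p.support) {i : ℕ} (hi : i ≤ p.length) :
    caterpillarContraction p t ℓ (p.getVert i) =
      .inl ⟨min i t, Nat.lt_succ_of_le (min_le_right _ _)⟩ := by
  rw [caterpillarContraction_eq_inl_iff, projIndex_getVert hG hp hi]
  refine ⟨?_, rfl⟩
  rintro ⟨s, hs⟩
  exact hoff s (hs ▸ p.getVert_mem_support i)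

lemma caterpillarContraction_surjective (hG : G.IsAcyclic) (hp : p.IsPath) (ht : t ≤ p.length)
    (hℓ : ℓ.Injective) (hoff : ∀ s, ℓ s ∉ p.support) :
    (caterpillarContraction p t ℓ).Surjective := by
  rintro (i | s)
  · refine ⟨p.getVert i, ?_⟩
    rw [caterpillarContraction_getVert hG hp hoff (by omega)]
    congr
    exact min_eq_left (Nat.le_of_lt_succ i.2)
  · exact ⟨ℓ s, (caterpillarContraction_eq_inr_iff hℓ).2 rfl⟩

lemma caterpillarContraction_induce_fiber_connected (hG : G.IsTree) (hp : p.IsPath)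
    (ht : t ≤ p.length) (hℓ : ℓ.Injective)
    (hleaf : ∀ s, (G.neighborSet (ℓ s)).Subsingleton)
    (hoff : ∀ s, ℓ s ∉ p.support) (w : Fin (t + 1) ⊕ β) :
    (G.induce (caterpillarContraction p t ℓ ⁻¹' {w})).Connected := by
  rcases w with i | s
  swap
  · have : caterpillarContraction p t ℓ ⁻¹' {.inr s} = {ℓ s} :=
      Set.ext fun v => caterpillarContraction_eq_inr_iff hℓ
    rw [this]
    exact Connected.of_subsingleton
  set F := caterpillarContraction p t ℓ ⁻¹' {.inl i}
  have hi : (i : ℕ) ≤ t := Nat.le_of_lt_succ i.2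
  have getVert_mem : ∀ r ≤ p.length, min r t = i → p.getVert r ∈ F := fun r hr hri => by
    change caterpillarContraction p t ℓ (p.getVert r) = .inl i
    rw [caterpillarContraction_getVert hG.isAcyclic hp hoff hr]
    exact congrArg _ (Fin.ext hri)
  have along_path : ∀ r, (i : ℕ) ≤ r → ∀ (hr : r ≤ p.length) (hri : min r t = i),
      (G.induce F).Reachable ⟨p.getVert i, getVert_mem i (by omega) (by omega)⟩
        ⟨p.getVert r, getVert_mem r hr hri⟩ := by
    intro r hir
    induction r, hir using Nat.le_induction with
    | base => exact fun _ _ => Reachable.refl _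
    | succ r hir ih =>
      intro hr hri
      exact (ih (by omega) (by omega)).trans (Adj.reachable (p.adj_getVert_succ (by omega)))
  refine (connected_iff_exists_forall_reachable _).2
    ⟨⟨p.getVert i, getVert_mem i (by omega) (by omega)⟩, fun ⟨v, hv⟩ => ?_⟩
  obtain ⟨hvℓ, hvi⟩ := caterpillarContraction_eq_inl_iff.1 hv
  obtain ⟨q, hq, hproj⟩ := p.exists_isPath_getVert_projIndex hG.connected.preconnected v
  have hsupp : ∀ y ∈ q.support, y ∈ F := by
    refine fun y hy => caterpillarContraction_eq_inl_iff.2 ⟨?_, hproj y hy ▸ hvi⟩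
    rintro ⟨s, rfl⟩
    exact hq.isTrail.not_mem_support_of_subsingleton_neighborSet (fun h => hvℓ ⟨s, h⟩)
      (fun h => hoff s (h ▸ p.getVert_mem_support _)) (hleaf s) hy
  have hvp := (projIndex_le_and_reachable hG.connected.preconnected (p := p) v).1
  exact (along_path _ (by omega) hvp hvi).trans (q.induce F hsupp).reachable.symm

lemma quotientGraph_caterpillarContraction_adj_inl (hG : G.IsTree) (hp : p.IsPath)
    (ht : t ≤ p.length) (hoff : ∀ s, ℓ s ∉ p.support) (i j : Fin (t + 1)) :
    (quotientGraph G (caterpillarContraction p t ℓ)).Adj (.inl i) (.inl j) ↔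
      (i : ℕ) + 1 = j ∨ (j : ℕ) + 1 = i := by
  have getVert_eq : ∀ r ≤ p.length, caterpillarContraction p t ℓ (p.getVert r) =
      .inl ⟨min r t, Nat.lt_succ_of_le (min_le_right _ _)⟩ :=
    fun r => caterpillarContraction_getVert hG.isAcyclic hp hoff
  have adj_succ : ∀ i j : Fin (t + 1), (i : ℕ) + 1 = j →
      (quotientGraph G (caterpillarContraction p t ℓ)).Adj (.inl i) (.inl j) := by
    intro i j hij
    refine ⟨fun h => by simp [Fin.ext_iff] at h; omega, p.getVert i, p.getVert (i + 1), ?_, ?_,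
      p.adj_getVert_succ (by omega)⟩
    · rw [getVert_eq _ (by omega)]; congr; omega
    · rw [getVert_eq _ (by omega)]; congr; omega
  refine ⟨?_, fun h => h.elim (adj_succ i j) fun h => (adj_succ j i h).symm⟩
  rintro ⟨hne, u, v, hu, hv, huv⟩
  obtain ⟨-, hui⟩ := caterpillarContraction_eq_inl_iff.1 hu
  obtain ⟨-, hvj⟩ := caterpillarContraction_eq_inl_iff.1 hv
  have hne : (i : ℕ) ≠ j := fun h => hne (congrArg _ (Fin.ext h))
  by_cases he : s(u, v) ∈ p.edges
  · obtain ⟨r, hr, her⟩ := p.mk_mem_edges_iff_exists.1 he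
    rcases Sym2.eq_iff.1 her with ⟨rfl, rfl⟩ | ⟨rfl, rfl⟩ <;>
      simp only [projIndex_getVert hG.isAcyclic hp (by omega : r ≤ p.length),
        projIndex_getVert hG.isAcyclic hp (by omega : r + 1 ≤ p.length)] at hui hvj <;> omega
  · exact (hne (hui ▸ hvj ▸ congrArg (min · t)
      (projIndex_eq_of_reachable (deleteEdges_adj.2 ⟨huv, he⟩).reachable))).elim

lemma quotientGraph_caterpillarContraction_neighborSet_inr_subsingleton (hℓ : ℓ.Injective)
    (hleaf : ∀ s, (G.neighborSet (ℓ s)).Subsingleton) (s : β) :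
    ((quotientGraph G (caterpillarContraction p t ℓ)).neighborSet (.inr s)).Subsingleton := by
  rintro _ ⟨-, u, v, hu, rfl, huv⟩ _ ⟨-, u', v', hu', rfl, huv'⟩
  rw [caterpillarContraction_eq_inr_iff hℓ] at hu hu'
  subst hu hu'
  rw [hleaf s huv huv']

theorem caterpillarContraction_spec [Finite β] (hG : G.IsTree) (hp : p.IsPath)
    (ht : t ≤ p.length) (hℓ : ℓ.Injective)
    (hleaf : ∀ s, (G.neighborSet (ℓ s)).Subsingleton)
    (hoff : ∀ s, ℓ s ∉ p.support) :
    (caterpillarContraction p t ℓ).Surjective ∧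
      (∀ w, (G.induce (caterpillarContraction p t ℓ ⁻¹' {w})).Connected) ∧
      IsCaterpillar (quotientGraph G (caterpillarContraction p t ℓ)) ∧
      edgeCount (quotientGraph G (caterpillarContraction p t ℓ)) = t + Nat.card β := by
  have hsurj := caterpillarContraction_surjective hG.isAcyclic hp ht hℓ hoff
  have hfib := caterpillarContraction_induce_fiber_connected hG hp ht hℓ hleaf hoff
  have htree := quotientGraph_isTree hG hsurj hfib
  refine ⟨hsurj, hfib, isCaterpillar_of_spine htree
    (quotientGraph_caterpillarContraction_adj_inl hG hp ht hoff)
    (quotientGraph_caterpillarContraction_neighborSet_inr_subsingleton hℓ hleaf), ?_⟩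
  have := htree.edgeCount_add_one
  rw [Nat.card_sum, Nat.card_eq_fintype_card, Fintype.card_fin] at this
  omega

end Contraction

lemma subsingleton_neighborSet_of_deg_eq_one {V : Type*} {G : SimpleGraph V} {v : V}
    (h : deg G v = 1) : (G.neighborSet v).Subsingleton := by
  obtain ⟨x, hx⟩ := Set.ncard_eq_one.1 h
  exact hx ▸ Set.subsingleton_singleton

lemma SimpleGraph.Connected.exists_isPath_length_eq_treeDiam {V : Type*} [Finite V]
    {G : SimpleGraph V} (hG : G.Connected) :
    ∃ (a b : V) (p : G.Walk a b), p.IsPath ∧ p.length = treeDiam G := by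
  have := hG.nonempty
  have hdiam : treeDiam G = G.diam := by
    refine IsGreatest.csSup_eq ⟨G.exists_dist_eq_diam, ?_⟩
    rintro _ ⟨u, v, rfl⟩
    exact G.dist_le_diam (connected_iff_ediam_ne_top.1 hG)
  obtain ⟨a, b, hab⟩ := G.exists_dist_eq_diam
  obtain ⟨p, hp, hlen⟩ := hG.exists_path_of_dist a b
  exact ⟨a, b, p, hp, by rw [hlen, hab, hdiam]⟩

lemma SimpleGraph.Walk.IsTrail.leafCount_le {V : Type*} [Finite V] {G : SimpleGraph V}
    {a b : V} {p : G.Walk a b} (hp : p.IsTrail) :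
    leafCount G ≤ ({v | deg G v = 1} \ {v | v ∈ p.support}).ncard + 2 := by
  have hsub : {v | deg G v = 1} ⊆ ({v | deg G v = 1} \ {v | v ∈ p.support}) ∪ {a, b} := by
    intro v hv
    by_contra hcon
    simp only [Set.mem_union, Set.mem_sdiff, Set.mem_insert_iff, Set.mem_singleton_iff,
      not_or, not_and, not_not] at hcon
    exact hp.not_mem_support_of_subsingleton_neighborSet hcon.2.1 hcon.2.2
      (subsingleton_neighborSet_of_deg_eq_one hv) (hcon.1 hv)
  calc leafCount G ≤ (({v | deg G v = 1} \ {v | v ∈ p.support}) ∪ {a, b}).ncard :=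
        Set.ncard_le_ncard hsub (Set.toFinite _)
    _ ≤ _ := (Set.ncard_union_le _ _).trans (by grw [Set.ncard_insert_le, Set.ncard_singleton])

theorem contract_tree_to_caterpillar_of_le_kappa_general
    {V : Type*} [Fintype V] (G : SimpleGraph V) (hG : G.IsTree)
    (k : ℕ) (hk2 : k ≤ kappa G) :
    ∃ (W : Type) (_ : Fintype W) (c : V → W),
      Function.Surjective c ∧
      (∀ w : W, (G.induce (c ⁻¹' {w})).Connected) ∧
      IsCaterpillar (quotientGraph G c) ∧
      edgeCount (quotientGraph G c) = k := by
  classical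
  obtain ⟨a, b, p, hp, hlen⟩ := hG.connected.exists_isPath_length_eq_treeDiam
  have hleaves := hp.isTrail.leafCount_le
  set L := {v | deg G v = 1} \ {v | v ∈ p.support}
  have hL : k - min k p.length ≤ Fintype.card L := by
    rw [← Nat.card_eq_fintype_card, Nat.card_coe_set_eq]
    rw [kappa, ← hlen] at hk2
    omega
  obtain ⟨f⟩ := Function.Embedding.nonempty_of_card_le ((Fintype.card_fin _).trans_le hL)
  obtain ⟨hsurj, hfib, hcat, hcount⟩ := caterpillarContraction_spec hG hp (min_le_right k _)
    (Subtype.val_injective.comp f.injective)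
    (fun s => subsingleton_neighborSet_of_deg_eq_one (f s).2.1) fun s => (f s).2.2
  exact ⟨_, inferInstance, _, hsurj, hfib, hcat, by rw [hcount, Nat.card_fin]; omega⟩

/-- For every finite tree `T` with at least one edge and every `k` with
`1 ≤ k ≤ κ(T)`, a caterpillar with exactly `k` edges can be obtained from `T` by contracting
edges. -/
theorem contract_tree_to_caterpillar_of_le_kappa
    {V : Type*} [Fintype V] (G : SimpleGraph V) (hG : G.IsTree) (hE : 1 ≤ edgeCount G)
    (k : ℕ) (hk1 : 1 ≤ k) (hk2 : k ≤ kappa G) :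
    ∃ (W : Type) (_ : Fintype W) (c : V → W),
      Function.Surjective c ∧
      (∀ w : W, (G.induce (c ⁻¹' {w})).Connected) ∧
      IsCaterpillar (quotientGraph G c) ∧
      edgeCount (quotientGraph G c) = k :=
  contract_tree_to_caterpillar_of_le_kappa_general G hG k hk2
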